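/- The sequence of real numbers q ↦ q·(1 − (q+1)(q−1)^10/q^11) (for natural numbers q ≥ 1) converges to 9 as q → ∞. In particular, 1 − (q+1)(q−1)^10/q^11 tends to 0 at rate 9/q. -/
import Mathlib

/- STATEMENT 14: the network failure probability `P_e = 1 - (q+1)(q-1)^10/q^11`
tends to `0` at rate `9/q`: the sequence `q * P_e` converges to `9`. -/
theorem butterfly_network_failure_probability_rate :
    Filter.Tendsto
      (fun q : ℕ => (q : ℝ) * (1 - ((q : ℝ) + 1) * ((q : ℝ) - 1) ^ 10 / (q : ℝ) ^ 11))
      Filter.atTop (nhds 9) := by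
  have h1 : Filter.Tendsto (fun q : ℕ => (1 : ℝ) / q) Filter.atTop (nhds 0) :=
    tendsto_one_div_atTop_nhds_zero_nat
  have hG : Continuous (fun t : ℝ =>
      9 - 35*t + 75*t^2 - 90*t^3 + 42*t^4 + 42*t^5 - 90*t^6 + 75*t^7 - 35*t^8 + 9*t^9 - t^10) := by
    continuity
  have h2 : Filter.Tendsto (fun q : ℕ =>
      (fun t : ℝ => 9 - 35*t + 75*t^2 - 90*t^3 + 42*t^4 + 42*t^5 - 90*t^6 + 75*t^7 - 35*t^8
        + 9*t^9 - t^10) ((1:ℝ)/q)) Filter.atTop (nhds 9) := by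
    have := (hG.tendsto 0).comp h1
    norm_num at this
    simpa only [Function.comp_def, one_div] using this
  refine h2.congr' ?_
  filter_upwards [Filter.eventually_ge_atTop 1] with q hq
  have hq0 : (q : ℝ) ≠ 0 := by positivity
  field_simp
  ring
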